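/- Let σ > 0 and for each integer N ≥ 2 let C_N > 1 be the unique solution of C_N = (3σ²/(8π²)) ∑_{k ∈ ℤ², ‖k‖ ≤ N} 1/(C_N − 1 + ‖k‖²). Then C_N → ∞ as N → ∞ and, more precisely, C_N / log N → 3σ²/(4π). -/

import Mathlib

open Real Filter Finset Topology

/-! Write `κ = 3σ²/(8π²)` and `a = C_N - 1`, so that `C_N = κ ∑_{‖k‖ ≤ N} 1/(a + ‖k‖²)`.
Comparing with integrals one coordinate at a time (`∑_l 1/(b + l²) ≈ π/√b` through `arctan`,
then `∑_j π/√(a + j²) ≈ 2π arsinh(M/√a)` through `arsinh`), the sum over the square `[-M, M]²`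
is `2π log(M/√a) + O(1 + 1/a)`, and the disc of radius `N` lies between the squares of half-widths
`N/2` and `N`. The term `k = 0` alone gives `C_N (C_N - 1) ≥ κ`, so `a` is bounded below; hence
`C_N ≤ 2πκ log N + O(1)`, and then `C_N ≥ 2πκ log N - πκ log C_N - O(1)`. As
`log C_N = O(log log N)`, this forces `C_N / log N → 2πκ = 3σ²/(4π)`. -/

/-- The finite set of lattice points `k ∈ ℤ²` with `‖k‖ ≤ N`, i.e. `k₁² + k₂² ≤ N²`. -/
noncomputable def latticeBall2 (N : ℕ) : Finset (ℤ × ℤ) :=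
  (Finset.Icc (-(N : ℤ)) (N : ℤ) ×ˢ Finset.Icc (-(N : ℤ)) (N : ℤ)).filter
    (fun k => k.1 ^ 2 + k.2 ^ 2 ≤ (N : ℤ) ^ 2)

section IntegralTest

variable {f F : ℝ → ℝ}

theorem sum_range_succ_le_sub_of_hasDerivAt (hF : ∀ x, 0 ≤ x → HasDerivAt F (f x) x)
    (hf : AntitoneOn f (Set.Ici 0)) (M : ℕ) :
    ∑ i ∈ range M, f (i + 1) ≤ F M - F 0 := by
  have hfM : AntitoneOn f (Set.uIcc 0 M) := hf.mono (by simp [Set.Icc_subset_Ici_self])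
  rw [← intervalIntegral.integral_eq_sub_of_hasDerivAt
    (fun x hx => hF x (by simp at hx; exact hx.1)) hfM.intervalIntegrable]
  simpa using AntitoneOn.sum_le_integral (x₀ := 0) (by simpa using hfM)

theorem sub_le_sum_range_of_hasDerivAt (hF : ∀ x, 0 ≤ x → HasDerivAt F (f x) x)
    (hf : AntitoneOn f (Set.Ici 0)) (M : ℕ) :
    F M - F 0 ≤ ∑ i ∈ range M, f i := by
  have hfM : AntitoneOn f (Set.uIcc 0 M) := hf.mono (by simp [Set.Icc_subset_Ici_self])
  rw [← intervalIntegral.integral_eq_sub_of_hasDerivAt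
    (fun x hx => hF x (by simp at hx; exact hx.1)) hfM.intervalIntegrable]
  simpa using AntitoneOn.integral_le_sum (x₀ := 0) (by simpa using hfM)

theorem sum_Icc_neg_eq_of_even (hfe : f.Even) (M : ℕ) :
    ∑ j ∈ Icc (-(M : ℤ)) M, f j = f 0 + 2 * ∑ i ∈ range M, f (i + 1) := by
  induction M with
  | zero => simp
  | succ M ih =>
    have hIcc : Icc (-((M : ℤ) + 1)) (M + 1) =
        insert (-((M : ℤ) + 1)) (insert ((M : ℤ) + 1) (Icc (-(M : ℤ)) M)) := by
      ext x; simp only [mem_Icc, mem_insert]; omega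
    rw [Nat.cast_succ, hIcc, sum_insert (by simp; omega), sum_insert (by simp), ih, sum_range_succ]
    push_cast
    rw [hfe]
    ring

theorem sum_Icc_neg_le_of_hasDerivAt (hfe : f.Even) (hF : ∀ x, 0 ≤ x → HasDerivAt F (f x) x)
    (hf : AntitoneOn f (Set.Ici 0)) (M : ℕ) :
    ∑ j ∈ Icc (-(M : ℤ)) M, f j ≤ f 0 + 2 * (F M - F 0) := by
  rw [sum_Icc_neg_eq_of_even hfe]
  linarith [sum_range_succ_le_sub_of_hasDerivAt hF hf M]

theorem sub_le_sum_Icc_neg_of_hasDerivAt (hfe : f.Even)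
    (hF : ∀ x, 0 ≤ x → HasDerivAt F (f x) x) (hf : AntitoneOn f (Set.Ici 0))
    (hf₀ : ∀ x, 0 ≤ x → 0 ≤ f x) (M : ℕ) :
    2 * (F M - F 0) - f 0 ≤ ∑ j ∈ Icc (-(M : ℤ)) M, f j := by
  have hshift : ∑ i ∈ range M, f i + f M = ∑ i ∈ range M, f (i + 1) + f 0 := by
    simpa using (sum_range_succ (fun i : ℕ => f i) M).symm.trans (sum_range_succ' _ M)
  rw [sum_Icc_neg_eq_of_even hfe]
  linarith [sub_le_sum_range_of_hasDerivAt hF hf M, hf₀ M M.cast_nonneg]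

end IntegralTest

theorem hasDerivAt_arctan_div_sqrt_div_sqrt {b : ℝ} (hb : 0 < b) (x : ℝ) :
    HasDerivAt (fun t => arctan (t / √b) / √b) (1 / (b + x ^ 2)) x := by
  refine ((((hasDerivAt_id' x).div_const √b).arctan).div_const √b).congr_deriv ?_
  have hsb : 0 < √b := sqrt_pos.2 hb
  field_simp
  rw [sq_sqrt hb.le]

theorem hasDerivAt_arsinh_div_sqrt {b : ℝ} (hb : 0 < b) (x : ℝ) :
    HasDerivAt (fun t => arsinh (t / √b)) (1 / √(b + x ^ 2)) x := by
  refine (((hasDerivAt_id' x).div_const √b).arsinh).congr_deriv ?_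
  have hsb : 0 < √b := sqrt_pos.2 hb
  rw [show b + x ^ 2 = b * (1 + (x / √b) ^ 2) by field_simp; rw [sq_sqrt hb.le]; ring,
    sqrt_mul hb.le, smul_eq_mul]
  field_simp

theorem arctan_le_self {x : ℝ} (hx : 0 ≤ x) : arctan x ≤ x := by
  simpa using le_tan (arctan_nonneg.2 hx) (arctan_lt_pi_div_two x)

theorem antitoneOn_one_div_add_sq {b : ℝ} (hb : 0 < b) :
    AntitoneOn (fun x : ℝ => 1 / (b + x ^ 2)) (Set.Ici 0) := by
  intro s (hs : 0 ≤ s) t _ hst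
  dsimp only
  gcongr

theorem antitoneOn_one_div_sqrt_add_sq {b : ℝ} (hb : 0 < b) :
    AntitoneOn (fun x : ℝ => 1 / √(b + x ^ 2)) (Set.Ici 0) := by
  intro s (hs : 0 ≤ s) t _ hst
  dsimp only
  gcongr

section OneDimensionalSums

variable {b : ℝ}

theorem sum_Icc_one_div_add_sq_le (hb : 0 < b) (M : ℕ) :
    ∑ j ∈ Icc (-(M : ℤ)) M, 1 / (b + (j : ℝ) ^ 2) ≤ 1 / b + π / √b := by
  have h := sum_Icc_neg_le_of_hasDerivAt (fun x => by simp)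
    (fun x _ => hasDerivAt_arctan_div_sqrt_div_sqrt hb x) (antitoneOn_one_div_add_sq hb) M
  have harctan := arctan_lt_pi_div_two (M / √b)
  have hsb : 0 < √b := sqrt_pos.2 hb
  simp only [zero_div, arctan_zero, sub_zero, zero_pow two_ne_zero, add_zero] at h
  calc ∑ j ∈ Icc (-(M : ℤ)) M, 1 / (b + (j : ℝ) ^ 2)
      ≤ 1 / b + 2 * (arctan (M / √b) / √b) := h
    _ ≤ 1 / b + 2 * ((π / 2) / √b) := by gcongr
    _ = 1 / b + π / √b := by ring

theorem sub_le_sum_Icc_one_div_add_sq (hb : 0 < b) {M : ℕ} (hM : 0 < M) :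
    π / √b - 2 / M - 1 / b ≤ ∑ j ∈ Icc (-(M : ℤ)) M, 1 / (b + (j : ℝ) ^ 2) := by
  have h := sub_le_sum_Icc_neg_of_hasDerivAt (fun x => by simp)
    (fun x _ => hasDerivAt_arctan_div_sqrt_div_sqrt hb x) (antitoneOn_one_div_add_sq hb)
    (fun x _ => by positivity) M
  have hsb : 0 < √b := sqrt_pos.2 hb
  have hMb : 0 < (M : ℝ) / √b := by positivity
  have htail : π / 2 - √b / M ≤ arctan (M / √b) := by
    have := arctan_le_self (inv_pos.2 hMb).le
    rw [arctan_inv_of_pos hMb, inv_div] at this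
    linarith
  simp only [zero_div, arctan_zero, sub_zero, zero_pow two_ne_zero, add_zero] at h
  calc π / √b - 2 / M - 1 / b = 2 * ((π / 2 - √b / M) / √b) - 1 / b := by
        field_simp
    _ ≤ 2 * (arctan (M / √b) / √b) - 1 / b := by gcongr
    _ ≤ ∑ j ∈ Icc (-(M : ℤ)) M, 1 / (b + (j : ℝ) ^ 2) := h

theorem sum_Icc_one_div_sqrt_add_sq_le (hb : 0 < b) (M : ℕ) :
    ∑ j ∈ Icc (-(M : ℤ)) M, 1 / √(b + (j : ℝ) ^ 2)
      ≤ 1 / √b + 2 * arsinh (M / √b) := by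
  simpa using sum_Icc_neg_le_of_hasDerivAt (fun x => by simp)
    (fun x _ => hasDerivAt_arsinh_div_sqrt hb x) (antitoneOn_one_div_sqrt_add_sq hb) M

theorem sub_le_sum_Icc_one_div_sqrt_add_sq (hb : 0 < b) (M : ℕ) :
    2 * arsinh (M / √b) - 1 / √b
      ≤ ∑ j ∈ Icc (-(M : ℤ)) M, 1 / √(b + (j : ℝ) ^ 2) := by
  simpa using sub_le_sum_Icc_neg_of_hasDerivAt (fun x => by simp)
    (fun x _ => hasDerivAt_arsinh_div_sqrt hb x) (antitoneOn_one_div_sqrt_add_sq hb)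
    (fun x _ => by positivity) M

end OneDimensionalSums

noncomputable def latticeSquare (M : ℕ) : Finset (ℤ × ℤ) :=
  Icc (-(M : ℤ)) M ×ˢ Icc (-(M : ℤ)) M

noncomputable def latticeResolventSum (s : Finset (ℤ × ℤ)) (a : ℝ) : ℝ :=
  ∑ k ∈ s, 1 / (a + ((k.1 : ℝ) ^ 2 + (k.2 : ℝ) ^ 2))

section LatticeSums

variable {a : ℝ}

theorem latticeResolventSum_mono {s t : Finset (ℤ × ℤ)} (hst : s ⊆ t) (ha : 0 ≤ a) :
    latticeResolventSum s a ≤ latticeResolventSum t a :=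
  sum_le_sum_of_subset_of_nonneg hst fun _ _ _ => by positivity

theorem one_div_le_latticeResolventSum {s : Finset (ℤ × ℤ)} (hs : (0, 0) ∈ s)
    (ha : 0 ≤ a) :
    1 / a ≤ latticeResolventSum s a := by
  calc 1 / a = 1 / (a + (((0 : ℤ) : ℝ) ^ 2 + ((0 : ℤ) : ℝ) ^ 2)) := by simp
    _ ≤ latticeResolventSum s a :=
      single_le_sum (f := fun k : ℤ × ℤ => 1 / (a + ((k.1 : ℝ) ^ 2 + (k.2 : ℝ) ^ 2)))
        (fun _ _ => by positivity) hs

theorem latticeResolventSum_square_le (ha : 0 < a) (M : ℕ) :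
    latticeResolventSum (latticeSquare M) a
      ≤ 1 / a + 2 * π / √a + 2 * π * arsinh (M / √a) := by
  have hrow (j : ℤ) : ∑ l ∈ Icc (-(M : ℤ)) M, 1 / (a + ((j : ℝ) ^ 2 + (l : ℝ) ^ 2))
      ≤ 1 / (a + (j : ℝ) ^ 2) + π / √(a + (j : ℝ) ^ 2) := by
    have := sum_Icc_one_div_add_sq_le (b := a + (j : ℝ) ^ 2) (by positivity) M
    simp_rw [add_assoc] at this
    exact this
  calc latticeResolventSum (latticeSquare M) a
      ≤ ∑ j ∈ Icc (-(M : ℤ)) M,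
          (1 / (a + (j : ℝ) ^ 2) + π / √(a + (j : ℝ) ^ 2)) := by
        rw [latticeResolventSum, latticeSquare, sum_product]
        exact sum_le_sum fun j _ => hrow j
    _ = ∑ j ∈ Icc (-(M : ℤ)) M, 1 / (a + (j : ℝ) ^ 2)
          + π * ∑ j ∈ Icc (-(M : ℤ)) M, 1 / √(a + (j : ℝ) ^ 2) := by
        simp only [sum_add_distrib, mul_sum, mul_one_div]
    _ ≤ (1 / a + π / √a) + π * (1 / √a + 2 * arsinh (M / √a)) := by
        gcongr
        · exact sum_Icc_one_div_add_sq_le ha M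
        · exact sum_Icc_one_div_sqrt_add_sq_le ha M
    _ = 1 / a + 2 * π / √a + 2 * π * arsinh (M / √a) := by ring

theorem sub_le_latticeResolventSum_square (ha : 0 < a) {M : ℕ} (hM : 0 < M) :
    2 * π * arsinh (M / √a) - 2 * π / √a - 1 / a - 6
      ≤ latticeResolventSum (latticeSquare M) a := by
  have hrow (j : ℤ) : π / √(a + (j : ℝ) ^ 2) - 2 / M - 1 / (a + (j : ℝ) ^ 2)
      ≤ ∑ l ∈ Icc (-(M : ℤ)) M, 1 / (a + ((j : ℝ) ^ 2 + (l : ℝ) ^ 2)) := by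
    have := sub_le_sum_Icc_one_div_add_sq (b := a + (j : ℝ) ^ 2) (by positivity) hM
    simp_rw [add_assoc] at this
    exact this
  have hcard : ((Icc (-(M : ℤ)) M).card : ℝ) = 2 * M + 1 := by
    rw [Int.card_Icc]; norm_cast; omega
  have hM' : (1 : ℝ) ≤ M := by exact_mod_cast hM
  calc 2 * π * arsinh (M / √a) - 2 * π / √a - 1 / a - 6
      = π * (2 * arsinh (M / √a) - 1 / √a) - 6 - (1 / a + π / √a) := by ring
    _ ≤ π * (2 * arsinh (M / √a) - 1 / √a) - (2 * M + 1) * (2 / M)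
          - (1 / a + π / √a) := by
        gcongr
        rw [mul_div_assoc', div_le_iff₀ (by positivity)]
        linarith
    _ ≤ π * ∑ j ∈ Icc (-(M : ℤ)) M, 1 / √(a + (j : ℝ) ^ 2) - (2 * M + 1) * (2 / M)
          - ∑ j ∈ Icc (-(M : ℤ)) M, 1 / (a + (j : ℝ) ^ 2) := by
        gcongr
        · exact sub_le_sum_Icc_one_div_sqrt_add_sq ha M
        · exact sum_Icc_one_div_add_sq_le ha M
    _ = ∑ j ∈ Icc (-(M : ℤ)) M,
          (π / √(a + (j : ℝ) ^ 2) - 2 / M - 1 / (a + (j : ℝ) ^ 2)) := by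
        simp only [sum_sub_distrib, sum_const, nsmul_eq_mul, hcard, mul_sum, mul_one_div]
    _ ≤ latticeResolventSum (latticeSquare M) a := by
        rw [latticeResolventSum, latticeSquare, sum_product]
        exact sum_le_sum fun j _ => hrow j

end LatticeSums

theorem latticeBall2_subset_latticeSquare (N : ℕ) : latticeBall2 N ⊆ latticeSquare N :=
  filter_subset _ _

theorem latticeSquare_div_two_subset_latticeBall2 (N : ℕ) :
    latticeSquare (N / 2) ⊆ latticeBall2 N := by
  intro k hk
  simp only [latticeSquare, mem_product, mem_Icc] at hk
  obtain ⟨⟨h1, h1'⟩, h2, h2'⟩ := hk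
  have hN : 2 * ((N / 2 : ℕ) : ℤ) ≤ N := by exact_mod_cast Nat.mul_div_le N 2
  have hk1 := sq_le_sq' h1 h1'
  have hk2 := sq_le_sq' h2 h2'
  simp only [latticeBall2, mem_filter, mem_product, mem_Icc]
  refine ⟨⟨⟨by omega, by omega⟩, by omega, by omega⟩, by nlinarith⟩

theorem zero_mem_latticeBall2 (N : ℕ) : ((0, 0) : ℤ × ℤ) ∈ latticeBall2 N := by
  simp [latticeBall2]

theorem arsinh_le_log_one_add_two_mul {y : ℝ} (hy : 0 ≤ y) : arsinh y ≤ log (1 + 2 * y) := by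
  have : √(1 + y ^ 2) ≤ 1 + y := sqrt_le_iff.2 ⟨by positivity, by nlinarith⟩
  exact log_le_log (by positivity) (by linarith)

theorem log_le_arsinh {y : ℝ} (hy : 0 < y) : log y ≤ arsinh y :=
  log_le_log hy (by linarith [sqrt_nonneg (1 + y ^ 2)])

section BallSums

variable {a₀ : ℝ}

theorem exists_latticeResolventSum_ball_le (ha₀ : 0 < a₀) :
    ∃ K, ∀ a, a₀ ≤ a → ∀ N : ℕ, 1 ≤ N →
      latticeResolventSum (latticeBall2 N) a ≤ 2 * π * log N + K := by
  refine ⟨1 / a₀ + 2 * π / √a₀ + 2 * π * log (1 + 2 / √a₀), fun a ha N hN => ?_⟩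
  have ha' : 0 < a := ha₀.trans_le ha
  have hsa₀ : 0 < √a₀ := sqrt_pos.2 ha₀
  have hsa : √a₀ ≤ √a := sqrt_le_sqrt ha
  have hN' : (1 : ℝ) ≤ N := by exact_mod_cast hN
  have harsinh : arsinh (N / √a) ≤ log N + log (1 + 2 / √a₀) :=
    calc arsinh (N / √a)
        ≤ log (1 + 2 * (N / √a)) := arsinh_le_log_one_add_two_mul (by positivity)
      _ ≤ log (N * (1 + 2 / √a₀)) := by
        refine log_le_log (by positivity) ?_
        have : 2 * (N / √a) ≤ N * (2 / √a₀) :=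
          calc 2 * (N / √a) = N * (2 / √a) := by ring
            _ ≤ N * (2 / √a₀) := by gcongr
        linarith
      _ = log N + log (1 + 2 / √a₀) := log_mul (by positivity) (by positivity)
  calc latticeResolventSum (latticeBall2 N) a
      ≤ latticeResolventSum (latticeSquare N) a :=
        latticeResolventSum_mono (latticeBall2_subset_latticeSquare N) ha'.le
    _ ≤ 1 / a + 2 * π / √a + 2 * π * arsinh (N / √a) := latticeResolventSum_square_le ha' N
    _ ≤ 1 / a₀ + 2 * π / √a₀ + 2 * π * (log N + log (1 + 2 / √a₀)) := by gcongr
    _ = _ := by ring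

theorem exists_sub_le_latticeResolventSum_ball (ha₀ : 0 < a₀) :
    ∃ K, ∀ a, a₀ ≤ a → ∀ N : ℕ, 2 ≤ N →
      2 * π * log N - π * log a - K ≤ latticeResolventSum (latticeBall2 N) a := by
  refine ⟨2 * π * log 4 + 2 * π / √a₀ + 1 / a₀ + 6, fun a ha N hN => ?_⟩
  have ha' : 0 < a := ha₀.trans_le ha
  have hsa₀ : 0 < √a₀ := sqrt_pos.2 ha₀
  have hsa : √a₀ ≤ √a := sqrt_le_sqrt ha
  have hM : 0 < N / 2 := by omega
  have hNM : (N : ℝ) / 4 ≤ (N / 2 : ℕ) := by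
    rw [div_le_iff₀ (by norm_num)]
    exact_mod_cast (by omega : N ≤ N / 2 * 4)
  have hlog : log N - log 4 - log a / 2 ≤ arsinh ((N / 2 : ℕ) / √a) :=
    calc log N - log 4 - log a / 2 = log (N / 4) - log √a := by
          rw [log_div (by positivity) (by norm_num), log_sqrt ha'.le]
      _ ≤ log (N / 2 : ℕ) - log √a := by gcongr
      _ = log ((N / 2 : ℕ) / √a) := (log_div (by positivity) (by positivity)).symm
      _ ≤ arsinh ((N / 2 : ℕ) / √a) := log_le_arsinh (by positivity)
  calc 2 * π * log N - π * log a - (2 * π * log 4 + 2 * π / √a₀ + 1 / a₀ + 6)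
      = 2 * π * (log N - log 4 - log a / 2) - 2 * π / √a₀ - 1 / a₀ - 6 := by ring
    _ ≤ 2 * π * arsinh ((N / 2 : ℕ) / √a) - 2 * π / √a - 1 / a - 6 := by gcongr
    _ ≤ latticeResolventSum (latticeSquare (N / 2)) a := sub_le_latticeResolventSum_square ha' hM
    _ ≤ latticeResolventSum (latticeBall2 N) a :=
        latticeResolventSum_mono (latticeSquare_div_two_subset_latticeBall2 N) ha'.le

end BallSums

theorem tendsto_div_of_le_mul_add_of_mul_sub_log_le {α : Type*} {l : Filter α} {u L : α → ℝ}
    {c d K K' : ℝ} (hc : 0 < c) (hd : 0 ≤ d) (hL : Tendsto L l atTop)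
    (hu : ∀ᶠ x in l, 0 < u x) (hle : ∀ᶠ x in l, u x ≤ c * L x + K)
    (hge : ∀ᶠ x in l, c * L x - d * log (u x) - K' ≤ u x) :
    Tendsto (fun x => u x / L x) l (𝓝 c) := by
  have hw : Tendsto (fun x => c * L x + K) l atTop :=
    tendsto_atTop_add_const_right _ K (hL.const_mul_atTop hc)
  have hlogw : Tendsto (fun x => log (c * L x + K) / L x) l (𝓝 0) := by
    have hwL : (fun x => c * L x + K) =O[l] L :=
      ((Asymptotics.isBigO_refl L l).const_mul_left c).add
        (Asymptotics.isLittleO_const_left.2 (Or.inr (tendsto_norm_atTop_atTop.comp hL))).isBigO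
    exact ((isLittleO_log_id_atTop.comp_tendsto hw).trans_isBigO hwL).tendsto_div_nhds_zero
  have hK : Tendsto (fun x => K / L x) l (𝓝 0) := hL.const_div_atTop K
  have hK' : Tendsto (fun x => K' / L x) l (𝓝 0) := hL.const_div_atTop K'
  have hupper : Tendsto (fun x => c + K / L x) l (𝓝 c) := by simpa using hK.const_add c
  have hlower : Tendsto (fun x => c - (d * (log (c * L x + K) / L x) + K' / L x)) l (𝓝 c) := by
    simpa using ((hlogw.const_mul d).add hK').const_sub c
  refine tendsto_of_tendsto_of_tendsto_of_le_of_le' hlower hupper ?_ ?_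
  · filter_upwards [hu, hle, hge, hL.eventually_gt_atTop 0] with x hux hlex hgex hLx
    have : d * log (u x) ≤ d * log (c * L x + K) :=
      mul_le_mul_of_nonneg_left (log_le_log hux hlex) hd
    rw [le_div_iff₀ hLx]
    calc (c - (d * (log (c * L x + K) / L x) + K' / L x)) * L x
        = c * L x - d * log (c * L x + K) - K' := by field_simp; ring
      _ ≤ u x := by linarith
  · filter_upwards [hle, hL.eventually_gt_atTop 0] with x hlex hLx
    rw [div_le_iff₀ hLx]
    calc u x ≤ c * L x + K := hlex
      _ = (c + K / L x) * L x := by field_simp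

theorem min_one_half_le_sub_one {κ C : ℝ} (hC : 1 < C) (h : κ ≤ C * (C - 1)) :
    min 1 (κ / 2) ≤ C - 1 := by
  rcases le_or_gt C 2 with hC2 | hC2
  · exact (min_le_right _ _).trans (by nlinarith)
  · exact (min_le_left _ _).trans (by linarith)

section FixedPoint

variable {κ : ℝ}

theorem le_mul_sub_one_of_eq_mul_latticeResolventSum {C : ℝ} {N : ℕ} (hκ : 0 ≤ κ)
    (h1 : 1 < C) (hC : C = κ * latticeResolventSum (latticeBall2 N) (C - 1)) :
    κ ≤ C * (C - 1) := by
  have h0 := one_div_le_latticeResolventSum (zero_mem_latticeBall2 N) (sub_pos.2 h1).le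
  have : κ / (C - 1) ≤ C :=
    calc κ / (C - 1) = κ * (1 / (C - 1)) := div_eq_mul_one_div _ _
      _ ≤ κ * latticeResolventSum (latticeBall2 N) (C - 1) := by gcongr
      _ = C := hC.symm
  rwa [div_le_iff₀ (sub_pos.2 h1)] at this

theorem exists_log_bounds_of_eq_mul_latticeResolventSum (hκ : 0 < κ) :
    ∃ K K', ∀ C : ℝ, ∀ N : ℕ, 2 ≤ N → 1 < C →
      C = κ * latticeResolventSum (latticeBall2 N) (C - 1) →
        C ≤ 2 * π * κ * log N + K ∧ 2 * π * κ * log N - π * κ * log C - K' ≤ C := by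
  obtain ⟨K, hK⟩ := exists_latticeResolventSum_ball_le (a₀ := min 1 (κ / 2)) (by positivity)
  obtain ⟨K', hK'⟩ :=
    exists_sub_le_latticeResolventSum_ball (a₀ := min 1 (κ / 2)) (by positivity)
  refine ⟨κ * K, κ * K', fun C N hN h1 hC => ?_⟩
  have hgap : min 1 (κ / 2) ≤ C - 1 :=
    min_one_half_le_sub_one h1 (le_mul_sub_one_of_eq_mul_latticeResolventSum hκ.le h1 hC)
  have hlogC : log (C - 1) ≤ log C := log_le_log (sub_pos.2 h1) (by linarith)
  constructor
  · calc C = κ * latticeResolventSum (latticeBall2 N) (C - 1) := hC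
      _ ≤ κ * (2 * π * log N + K) := by gcongr; exact hK _ hgap N (by omega)
      _ = 2 * π * κ * log N + κ * K := by ring
  · calc 2 * π * κ * log N - π * κ * log C - κ * K'
        = κ * (2 * π * log N - π * log C - K') := by ring
      _ ≤ κ * (2 * π * log N - π * log (C - 1) - K') := by gcongr
      _ ≤ κ * latticeResolventSum (latticeBall2 N) (C - 1) := by
        gcongr; exact hK' _ hgap N hN
      _ = C := hC.symm

end FixedPoint

/-- Let `σ > 0` and for each `N ≥ 2` let `C_N > 1` be the unique
solution of `C_N = (3σ²/(8π²)) ∑_{k ∈ ℤ², ‖k‖ ≤ N} 1/(C_N − 1 + ‖k‖²)`.  Then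
`C_N → ∞` and, more precisely, `C_N / log N → 3σ²/(4π)` as `N → ∞`. -/
theorem wick_constant_log_asymptotics (σ : ℝ) (hσ : 0 < σ) (C : ℕ → ℝ)
    (hC : ∀ N : ℕ, 2 ≤ N → 1 < C N ∧
      C N = 3 * σ ^ 2 / (8 * Real.pi ^ 2) *
        ∑ k ∈ latticeBall2 N, 1 / (C N - 1 + ((k.1 : ℝ) ^ 2 + (k.2 : ℝ) ^ 2))) :
    Filter.Tendsto C Filter.atTop Filter.atTop ∧
    Filter.Tendsto (fun N : ℕ => C N / Real.log N) Filter.atTop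
      (nhds (3 * σ ^ 2 / (4 * Real.pi))) := by
  set κ := 3 * σ ^ 2 / (8 * π ^ 2)
  obtain ⟨K, K', hKK'⟩ :=
    exists_log_bounds_of_eq_mul_latticeResolventSum (κ := κ) (by positivity)
  have hlog : Tendsto (fun N : ℕ => log N) atTop atTop :=
    tendsto_log_atTop.comp tendsto_natCast_atTop_atTop
  have hratio : Tendsto (fun N => C N / log N) atTop (𝓝 (2 * π * κ)) := by
    refine tendsto_div_of_le_mul_add_of_mul_sub_log_le (d := π * κ) (K := K) (K' := K')
      (by positivity) (by positivity) hlog ?_ ?_ ?_ <;>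
      filter_upwards [eventually_ge_atTop 2] with N hN
    · linarith [(hC N hN).1]
    · exact (hKK' (C N) N hN (hC N hN).1 (hC N hN).2).1
    · exact (hKK' (C N) N hN (hC N hN).1 (hC N hN).2).2
  have hlim : 2 * π * κ = 3 * σ ^ 2 / (4 * π) := by simp only [κ]; field_simp; ring
  rw [hlim] at hratio
  refine ⟨(hratio.pos_mul_atTop (by positivity) hlog).congr' ?_, hratio⟩
  filter_upwards [eventually_ge_atTop 2] with N hN
  exact div_mul_cancel₀ _ (log_pos (by exact_mod_cast hN)).ne'
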